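/- Let Σ be a finite set, Q a probability distribution with q_σ > 0, r_1,…,r_k : Σ → ℝ, and ρ ∈ ℝ^k. If P* minimizes D(P||Q) over the open simplex Δ' subject to E_P r_i = ρ_i for 1 ≤ i ≤ k, and the constraint gradients are linearly independent, then there exist λ_0, λ_1, …, λ_k ∈ ℝ such that p*_σ = q_σ exp(−1 − λ_0 − Σ_{i=1}^k λ_i r_i(σ)) for all σ ∈ Σ. -/

import Mathlib

/-!
Perturb `P*` along a direction `u` that preserves every constraint, i.e. `u ⬝ᵥ 1 = 0` and
`u ⬝ᵥ rᵢ = 0`. For small `t` the point `P* + t u` stays in the open simplex, so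
`t ↦ D(P* + t u ‖ Q)` has a local minimum at `0`; its derivative there,
`∑ u_σ (log (p*_σ / q_σ) + 1)`, vanishes. Hence `log (P* / Q)` annihilates every vector
annihilating `1, r₁, …, r_k`, so it lies in their span by finite-dimensional duality, and
exponentiating gives the Boltzmann form.
-/

open Finset Real Filter Topology

theorem Submodule.mem_span_range_of_forall_dotProduct_eq_zero {K ι n : Type*} [Field K]
    [Fintype n] {v : ι → n → K} {f : n → K}
    (h : ∀ u : n → K, (∀ j, u ⬝ᵥ v j = 0) → u ⬝ᵥ f = 0) :
    f ∈ span K (Set.range v) := by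
  classical
  rw [← Subspace.forall_mem_dualAnnihilator_apply_eq_zero_iff]
  intro φ hφ
  obtain ⟨u, rfl⟩ := (dotProductEquiv K n).surjective φ
  exact h u fun j => (mem_dualAnnihilator _).mp hφ _ (subset_span ⟨j, rfl⟩)

section RelEntropy

variable {α : Type*} [Fintype α]

noncomputable def relEntropy (p q : α → ℝ) : ℝ := ∑ σ, p σ * log (p σ / q σ)

theorem hasDerivAt_relEntropy_add_smul {p q : α → ℝ} (hp : ∀ σ, p σ ≠ 0)
    (hq : ∀ σ, q σ ≠ 0) (u : α → ℝ) :
    HasDerivAt (fun t : ℝ => relEntropy (p + t • u) q)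
      (∑ σ, u σ * (log (p σ / q σ) + 1)) 0 := by
  refine HasDerivAt.fun_sum fun σ _ => ?_
  have hline : HasDerivAt (fun t : ℝ => p σ + t * u σ) (u σ) 0 := by
    simpa using ((hasDerivAt_id (0 : ℝ)).mul_const (u σ)).const_add (p σ)
  have hlog := (hline.div_const (q σ)).log (by simpa using div_ne_zero (hp σ) (hq σ))
  exact (hline.fun_mul hlog).congr_deriv (by field_simp [hp σ, hq σ]; simp)

theorem IsLocalMin.sum_mul_log_div_eq_zero {p q u : α → ℝ} (hp : ∀ σ, p σ ≠ 0)
    (hq : ∀ σ, q σ ≠ 0) (hu : ∑ σ, u σ = 0)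
    (hmin : IsLocalMin (fun t : ℝ => relEntropy (p + t • u) q) 0) :
    ∑ σ, u σ * log (p σ / q σ) = 0 := by
  simpa [mul_add, sum_add_distrib, hu] using
    hmin.hasDerivAt_eq_zero (hasDerivAt_relEntropy_add_smul hp hq u)

theorem eventually_forall_pos_add_smul {p : α → ℝ} (hp : ∀ σ, 0 < p σ) (u : α → ℝ) :
    ∀ᶠ t in 𝓝 (0 : ℝ), ∀ σ, 0 < (p + t • u) σ := by
  refine eventually_all.2 fun σ => ?_
  have hcont : ContinuousAt (fun t : ℝ => p σ + t * u σ) 0 := by fun_prop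
  exact continuousAt_const.eventually_lt hcont (by simpa using hp σ)

end RelEntropy

theorem stmt9_general {α : Type*} [Fintype α]
    (q : α → ℝ) (hq : ∀ σ, 0 < q σ)
    {k : ℕ} (r : Fin k → α → ℝ) (ρ : Fin k → ℝ)
    (pstar : α → ℝ)
    (hpos : ∀ σ, 0 < pstar σ) (hsum : ∑ σ, pstar σ = 1)
    (hconstr : ∀ i, ∑ σ, pstar σ * r i σ = ρ i)
    (hmin : ∀ p : α → ℝ, (∀ σ, 0 < p σ) → (∑ σ, p σ = 1) →
      (∀ i, ∑ σ, p σ * r i σ = ρ i) →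
      ∑ σ, pstar σ * Real.log (pstar σ / q σ) ≤
        ∑ σ, p σ * Real.log (p σ / q σ)) :
    ∃ (l0 : ℝ) (l : Fin k → ℝ), ∀ σ,
      pstar σ = q σ * Real.exp (-1 - l0 - ∑ i, l i * r i σ) := by
  set v : Fin (k + 1) → α → ℝ := Fin.cons (fun _ => 1) r
  have hfirstOrder : ∀ u, (∀ j, u ⬝ᵥ v j = 0) → u ⬝ᵥ (fun σ => log (pstar σ / q σ)) = 0 := by
    intro u hu
    have hu0 : ∑ σ, u σ = 0 := by simpa [v, dotProduct] using hu 0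
    have hur : ∀ i, u ⬝ᵥ r i = 0 := fun i => by simpa [v] using hu i.succ
    refine IsLocalMin.sum_mul_log_div_eq_zero (fun σ => (hpos σ).ne') (fun σ => (hq σ).ne') hu0 ?_
    filter_upwards [eventually_forall_pos_add_smul hpos u] with t ht
    rw [zero_smul, add_zero]
    refine hmin _ ht ?_ fun i => ?_
    · simp [sum_add_distrib, ← mul_sum, hsum, hu0]
    · change (pstar + t • u) ⬝ᵥ r i = ρ i
      rw [add_dotProduct, smul_dotProduct, hur i, smul_zero, add_zero]
      exact hconstr i
  obtain ⟨c, hc⟩ := Submodule.mem_span_range_iff_exists_fun ℝ |>.mp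
    (Submodule.mem_span_range_of_forall_dotProduct_eq_zero hfirstOrder)
  refine ⟨-1 - c 0, fun i => -c i.succ, fun σ => ?_⟩
  have hlog : log (pstar σ / q σ) = c 0 + ∑ i, c i.succ * r i σ := by
    simpa [v, Fin.sum_univ_succ] using (congrFun hc σ).symm
  rw [← div_mul_cancel₀ (pstar σ) (hq σ).ne', ← exp_log (div_pos (hpos σ) (hq σ)), hlog]
  simp only [neg_mul, sum_neg_distrib]
  ring_nf

/-- Lagrange-multiplier (Boltzmann) characterization of the minimum-KL
distribution: if `P*` minimizes `D(P‖Q)` over the open simplex subject to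
`E_P rᵢ = ρᵢ`, and `1, r₁, …, r_k` are linearly independent, then
`p*_σ = q_σ exp(−1 − λ₀ − ∑ λᵢ rᵢ(σ))` for some `λ₀, λ₁, …, λ_k`. -/
theorem stmt9 {α : Type*} [Fintype α] [Nonempty α]
    (q : α → ℝ) (hq : ∀ σ, 0 < q σ) (hq1 : ∑ σ, q σ = 1)
    {k : ℕ} (r : Fin k → α → ℝ) (ρ : Fin k → ℝ)
    (hlin : LinearIndependent ℝ
      (Fin.cons (fun _ => (1 : ℝ)) r : Fin (k + 1) → α → ℝ))
    (pstar : α → ℝ)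
    (hpos : ∀ σ, 0 < pstar σ) (hsum : ∑ σ, pstar σ = 1)
    (hconstr : ∀ i, ∑ σ, pstar σ * r i σ = ρ i)
    (hmin : ∀ p : α → ℝ, (∀ σ, 0 < p σ) → (∑ σ, p σ = 1) →
      (∀ i, ∑ σ, p σ * r i σ = ρ i) →
      ∑ σ, pstar σ * Real.log (pstar σ / q σ) ≤
        ∑ σ, p σ * Real.log (p σ / q σ)) :
    ∃ (l0 : ℝ) (l : Fin k → ℝ), ∀ σ,
      pstar σ = q σ * Real.exp (-1 - l0 - ∑ i, l i * r i σ) :=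
  stmt9_general q hq r ρ pstar hpos hsum hconstr hmin
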